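/- arXiv:2003.12342 — 2 statements merged into one kernel-verified Lean document; each statement's English description precedes it below -/
import Mathlib

section
/- Let ξ>0, c>0 and let f:ℝ→ℝ be twice continuously differentiable. Define u(x,t) = (2/Beta(ξ,1/2))·∫_0^1 (1-y²)^{ξ-1}·(f(x+yct)+f(x-yct))/2 dy for t>0. Then u satisfies the one-dimensional EPD equation ∂²u/∂t² + (2ξ/t)∂u/∂t = c²∂²u/∂x² for all x∈ℝ and t>0. -/
/-!
Write `u x t = K * M x (c * t)` with
`M x r = ∫₀¹ (1 - y²)^(ξ-1) (f (x + y r) + f (x - y r)) / 2 dy`.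
Differentiating under the integral (the weight `w = (1 - y²)^(ξ-1)` is integrable and the rest
of the integrand has continuous derivatives) gives `∂²ₓM = ∫ w S`, `∂ᵣM = ∫ w y A` and
`∂²ᵣM = ∫ w y² S`, where `S = (f'' (x + y r) + f'' (x - y r)) / 2` and
`A = (f' (x + y r) - f' (x - y r)) / 2`. Since `(1 - y²)^ξ` vanishes at `y = 1` with
`d/dy (1 - y²)^ξ = -2ξ y (1 - y²)^(ξ-1)`, and `A` vanishes at `y = 0`, integration by parts
gives `r ∫ (1 - y²) w S = 2ξ ∫ w y A`, which is the identity
`r ∂²ᵣM + 2ξ ∂ᵣM = r ∂²ₓM`; rescaling `r = c t` gives the EPD equation.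
-/

open MeasureTheory Real Set

open scoped Interval

noncomputable def betaFn (a b : ℝ) : ℝ := Real.Gamma a * Real.Gamma b / Real.Gamma (a + b)

theorem intervalIntegral.hasDerivAt_integral_mul_of_continuous {w : ℝ → ℝ} {a b : ℝ}
    (hw : IntervalIntegrable w volume a b) {G G' : ℝ → ℝ → ℝ} (hG : ∀ s, Continuous (G s))
    (hG' : Continuous (Function.uncurry G'))
    (hGG' : ∀ s y, HasDerivAt (G · y) (G' s y) s) (s₀ : ℝ) :
    HasDerivAt (fun s => ∫ y in a..b, w y * G s y) (∫ y in a..b, w y * G' s₀ y) s₀ := by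
  have hw_meas : AEStronglyMeasurable w (volume.restrict (Ι a b)) :=
    (intervalIntegrable_iff.1 hw).aestronglyMeasurable
  obtain ⟨C, hC⟩ := ((isCompact_closedBall s₀ 1).prod isCompact_uIcc).exists_bound_of_continuousOn
    hG'.continuousOn
  refine (intervalIntegral.hasDerivAt_integral_of_dominated_loc_of_deriv_le
    (bound := fun y => ‖w y‖ * C) (Metric.ball_mem_nhds s₀ one_pos)
    (.of_forall fun s => hw_meas.mul (hG s).aestronglyMeasurable)
    (hw.mul_continuousOn (hG s₀).continuousOn)
    (hw_meas.mul (hG'.comp (Continuous.prodMk_right s₀)).aestronglyMeasurable)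
    (.of_forall fun y hy s hs => ?_) (hw.norm.mul_const C)
    (.of_forall fun y _ s _ => (hGG' s y).const_mul (w y))).2
  rw [norm_mul]
  exact mul_le_mul_of_nonneg_left (hC (s, y) ⟨Metric.ball_subset_closedBall hs,
    uIoc_subset_uIcc hy⟩) (norm_nonneg _)

theorem intervalIntegrable_one_sub_sq_rpow {s : ℝ} (hs : -1 < s) :
    IntervalIntegrable (fun y : ℝ => (1 - y ^ 2) ^ s) volume 0 1 := by
  have h_one_sub : IntervalIntegrable (fun y : ℝ => (1 - y) ^ s) volume 0 1 := by
    simpa using ((intervalIntegral.intervalIntegrable_rpow' (a := 0) (b := 1)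
      hs).comp_sub_left 1).symm
  have h_one_add : ContinuousOn (fun y : ℝ => (1 + y) ^ s) (uIcc 0 1) := fun y hy => by
    rw [uIcc_of_le zero_le_one] at hy
    exact ((continuous_const.add continuous_id).continuousAt.rpow_const
      (Or.inl (by simp; linarith [hy.1]))).continuousWithinAt
  refine (h_one_sub.mul_continuousOn h_one_add).congr fun y hy => ?_
  rw [uIoc_of_le zero_le_one] at hy
  rw [← Real.mul_rpow (by linarith [hy.2]) (by linarith [hy.1])]
  ring_nf

theorem integral_one_sub_sq_rpow_mul_deriv {ξ : ℝ} (hξ : 0 < ξ) {p p' : ℝ → ℝ}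
    (hp : ContinuousOn p (uIcc 0 1)) (hpp' : ∀ y ∈ Ioo 0 1, HasDerivAt p (p' y) y)
    (hp' : IntervalIntegrable p' volume 0 1) :
    ∫ y in (0:ℝ)..1, (1 - y ^ 2) ^ ξ * p' y
      = 2 * ξ * (∫ y in (0:ℝ)..1, (1 - y ^ 2) ^ (ξ - 1) * (y * p y)) - p 0 := by
  have hu : ∀ y ∈ Ioo (min 0 1) (max 0 1), HasDerivAt (fun y : ℝ => (1 - y ^ 2) ^ ξ)
      (-(2 * ξ) * (y * (1 - y ^ 2) ^ (ξ - 1))) y := fun y hy => by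
    simp only [zero_le_one, min_eq_left, max_eq_right, mem_Ioo] at hy
    have := ((hasDerivAt_pow 2 y).const_sub 1).rpow_const (p := ξ) (Or.inl (by nlinarith))
    convert this using 1
    ring
  have hu_int :
      IntervalIntegrable (fun y : ℝ => -(2 * ξ) * (y * (1 - y ^ 2) ^ (ξ - 1))) volume 0 1 :=
    ((intervalIntegrable_one_sub_sq_rpow (by linarith)).continuousOn_mul
      continuousOn_id).const_mul _
  have hu_cont : ContinuousOn (fun y : ℝ => (1 - y ^ 2) ^ ξ) (uIcc 0 1) :=
    (by fun_prop : Continuous fun y : ℝ => 1 - y ^ 2).continuousOn.rpow_const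
      fun _ _ => Or.inr hξ.le
  rw [intervalIntegral.integral_mul_deriv_eq_deriv_mul_of_hasDerivAt hu_cont hp hu
    (by simpa using hpp') hu_int hp']
  have h_int : ∫ y in (0:ℝ)..1, -(2 * ξ) * (y * (1 - y ^ 2) ^ (ξ - 1)) * p y
      = -(2 * ξ) * ∫ y in (0:ℝ)..1, (1 - y ^ 2) ^ (ξ - 1) * (y * p y) := by
    rw [← intervalIntegral.integral_const_mul]
    congr 1 with y
    ring
  rw [h_int]
  norm_num [Real.zero_rpow hξ.ne']
  ring

noncomputable def symmMean (g : ℝ → ℝ) (x r : ℝ) : ℝ := (g (x + r) + g (x - r)) / 2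

noncomputable def skewMean (g : ℝ → ℝ) (x r : ℝ) : ℝ := (g (x + r) - g (x - r)) / 2

section Means

variable {g g' : ℝ → ℝ}

theorem hasDerivAt_symmMean_left (hg : ∀ z, HasDerivAt g (g' z) z) (x r : ℝ) :
    HasDerivAt (symmMean g · r) (symmMean g' x r) x := by
  have hplus := (hg (x + r)).comp x ((hasDerivAt_id x).add_const r)
  have hminus := (hg (x - r)).comp x ((hasDerivAt_id x).sub_const r)
  simpa [symmMean] using (hplus.add hminus).div_const 2

theorem hasDerivAt_symmMean_right (hg : ∀ z, HasDerivAt g (g' z) z) (x r : ℝ) :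
    HasDerivAt (symmMean g x) (skewMean g' x r) r := by
  have hplus := (hg (x + r)).comp r ((hasDerivAt_id r).const_add x)
  have hminus := (hg (x - r)).comp r ((hasDerivAt_id r).const_sub x)
  unfold symmMean skewMean
  exact ((hplus.add hminus).div_const 2).congr_deriv (by ring)

theorem hasDerivAt_skewMean_right (hg : ∀ z, HasDerivAt g (g' z) z) (x r : ℝ) :
    HasDerivAt (skewMean g x) (symmMean g' x r) r := by
  have hplus := (hg (x + r)).comp r ((hasDerivAt_id r).const_add x)
  have hminus := (hg (x - r)).comp r ((hasDerivAt_id r).const_sub x)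
  unfold symmMean skewMean
  exact ((hplus.sub hminus).div_const 2).congr_deriv (by ring)

@[fun_prop]
theorem Continuous.symmMean {α : Type*} [TopologicalSpace α] (hg : Continuous g) {a b : α → ℝ}
    (ha : Continuous a) (hb : Continuous b) : Continuous fun t => symmMean g (a t) (b t) := by
  unfold _root_.symmMean; fun_prop

@[fun_prop]
theorem Continuous.skewMean {α : Type*} [TopologicalSpace α] (hg : Continuous g) {a b : α → ℝ}
    (ha : Continuous a) (hb : Continuous b) : Continuous fun t => skewMean g (a t) (b t) := by
  unfold _root_.skewMean; fun_prop

end Means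

noncomputable def epdMean (ξ : ℝ) (g : ℝ → ℝ) (x r : ℝ) : ℝ :=
  ∫ y in (0:ℝ)..1, (1 - y ^ 2) ^ (ξ - 1) * symmMean g x (y * r)

section EPDMean

variable {ξ : ℝ} {g g' : ℝ → ℝ}

theorem hasDerivAt_epdMean_left (hξ : 0 < ξ) (hg : ∀ z, HasDerivAt g (g' z) z)
    (hg' : Continuous g') (x r : ℝ) :
    HasDerivAt (epdMean ξ g · r) (epdMean ξ g' x r) x := by
  have hg_cont : Continuous g := Differentiable.continuous fun z => (hg z).differentiableAt
  exact intervalIntegral.hasDerivAt_integral_mul_of_continuous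
    (G := fun z y => symmMean g z (y * r)) (intervalIntegrable_one_sub_sq_rpow (by linarith))
    (by fun_prop) (by unfold Function.uncurry; fun_prop)
    (fun z y => hasDerivAt_symmMean_left hg z (y * r)) x

theorem hasDerivAt_epdMean_right (hξ : 0 < ξ) (hg : ∀ z, HasDerivAt g (g' z) z)
    (hg' : Continuous g') (x r : ℝ) :
    HasDerivAt (epdMean ξ g x)
      (∫ y in (0:ℝ)..1, (1 - y ^ 2) ^ (ξ - 1) * (y * skewMean g' x (y * r))) r := by
  have hg_cont : Continuous g := Differentiable.continuous fun z => (hg z).differentiableAt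
  exact intervalIntegral.hasDerivAt_integral_mul_of_continuous
    (G := fun r y => symmMean g x (y * r)) (G' := fun r y => y * skewMean g' x (y * r))
    (intervalIntegrable_one_sub_sq_rpow (by linarith))
    (by fun_prop) (by unfold Function.uncurry; fun_prop)
    (fun r y => ((hasDerivAt_symmMean_right hg x (y * r)).comp r
        ((hasDerivAt_id r).const_mul y)).congr_deriv (by ring)) r

theorem hasDerivAt_integral_skewMean (hξ : 0 < ξ) (hg : ∀ z, HasDerivAt g (g' z) z)
    (hg' : Continuous g') (x r : ℝ) :
    HasDerivAt (fun r => ∫ y in (0:ℝ)..1, (1 - y ^ 2) ^ (ξ - 1) * (y * skewMean g x (y * r)))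
      (∫ y in (0:ℝ)..1, (1 - y ^ 2) ^ (ξ - 1) * (y ^ 2 * symmMean g' x (y * r))) r := by
  have hg_cont : Continuous g := Differentiable.continuous fun z => (hg z).differentiableAt
  exact intervalIntegral.hasDerivAt_integral_mul_of_continuous
    (G := fun r y => y * skewMean g x (y * r)) (G' := fun r y => y ^ 2 * symmMean g' x (y * r))
    (intervalIntegrable_one_sub_sq_rpow (by linarith))
    (by fun_prop) (by unfold Function.uncurry; fun_prop)
    (fun r y => (((hasDerivAt_skewMean_right hg x (y * r)).comp r
        ((hasDerivAt_id r).const_mul y)).const_mul y).congr_deriv (by ring)) r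

theorem epdMean_eulerPoissonDarboux (hξ : 0 < ξ) (hg : ContDiff ℝ 2 g) (x r : ℝ) :
    r * deriv (deriv (epdMean ξ g x)) r + 2 * ξ * deriv (epdMean ξ g x) r
      = r * deriv (deriv (epdMean ξ g · r)) x := by
  have hg₁ : ∀ z, HasDerivAt g (deriv g z) z := fun z =>
    (hg.differentiable (by norm_num) z).hasDerivAt
  have hg₂ : ∀ z, HasDerivAt (deriv g) (deriv (deriv g) z) z := fun z =>
    ((hg.deriv' (n := 1)).differentiable (by norm_num) z).hasDerivAt
  have hc₁ : Continuous (deriv g) := hg.continuous_deriv (by norm_num)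
  have hc₂ : Continuous (deriv (deriv g)) := (hg.deriv' (n := 1)).continuous_deriv le_rfl
  have h_xx : deriv (deriv (epdMean ξ g · r)) x = epdMean ξ (deriv (deriv g)) x r := by
    rw [funext fun z => (hasDerivAt_epdMean_left hξ hg₁ hc₁ z r).deriv]
    exact (hasDerivAt_epdMean_left hξ hg₂ hc₂ x r).deriv
  rw [h_xx, funext fun r => (hasDerivAt_epdMean_right hξ hg₁ hc₁ x r).deriv,
    (hasDerivAt_integral_skewMean hξ hg₂ hc₂ x r).deriv]
  have h_ibp := integral_one_sub_sq_rpow_mul_deriv hξ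
    (p := fun y => skewMean (deriv g) x (y * r))
    (p' := fun y => r * symmMean (deriv (deriv g)) x (y * r)) (by fun_prop)
    (fun y _ => by
      exact ((hasDerivAt_skewMean_right hg₂ x (y * r)).comp y
        (hasDerivAt_mul_const r)).congr_deriv (mul_comm _ _))
    (Continuous.intervalIntegrable (by fun_prop) 0 1)
  have h_split : epdMean ξ (deriv (deriv g)) x r
      = (∫ y in (0:ℝ)..1, (1 - y ^ 2) ^ (ξ - 1) * (y ^ 2 * symmMean (deriv (deriv g)) x (y * r)))
        + ∫ y in (0:ℝ)..1, (1 - y ^ 2) ^ ξ * symmMean (deriv (deriv g)) x (y * r) := by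
    rw [← intervalIntegral.integral_add]
    · refine intervalIntegral.integral_congr fun y hy => ?_
      rw [uIcc_of_le zero_le_one] at hy
      have h_weight : (1 - y ^ 2) ^ ξ = (1 - y ^ 2) ^ (ξ - 1) * (1 - y ^ 2) := by
        rw [← Real.rpow_add_one' (by nlinarith [hy.1, hy.2]) (by simpa using hξ.ne'),
          sub_add_cancel]
      rw [h_weight]
      ring
    · exact (intervalIntegrable_one_sub_sq_rpow (by linarith)).mul_continuousOn (by fun_prop)
    · exact Continuous.intervalIntegrable (by fun_prop (disch := exact hξ.le)) 0 1
  have hp0 : skewMean (deriv g) x (0 * r) = 0 := by simp [skewMean]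
  simp only [mul_left_comm _ r, intervalIntegral.integral_const_mul, hp0, sub_zero] at h_ibp
  rw [h_split]
  linear_combination -h_ibp

end EPDMean

theorem stmt_6_general (ξ c : ℝ) (hξ : 0 < ξ) (f : ℝ → ℝ) (hf : ContDiff ℝ 2 f)
    (u : ℝ → ℝ → ℝ)
    (hu : ∀ x t, u x t = (2 / betaFn ξ (1 / 2)) *
      ∫ y in (0:ℝ)..1, (1 - y ^ 2) ^ (ξ - 1) * ((f (x + y * c * t) + f (x - y * c * t)) / 2)) :
    ∀ x t, 0 < t →
      deriv (deriv (fun s => u x s)) t + (2 * ξ / t) * deriv (fun s => u x s) t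
        = c ^ 2 * deriv (deriv (fun y => u y t)) x := by
  intro x t ht
  set K := 2 / betaFn ξ (1 / 2)
  have hu_mean : u = fun x t => K * epdMean ξ f x (c * t) := by
    ext x t
    simp only [hu, epdMean, symmMean, mul_assoc]
  subst hu_mean
  simp only [deriv_const_mul_field', deriv_comp_mul_left, smul_eq_mul]
  field_simp
  linear_combination (K * c) * epdMean_eulerPoissonDarboux hξ hf x (c * t)

theorem stmt_6 (ξ c : ℝ) (hξ : 0 < ξ) (hc : 0 < c) (f : ℝ → ℝ) (hf : ContDiff ℝ 2 f)
    (u : ℝ → ℝ → ℝ)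
    (hu : ∀ x t, u x t = (2 / betaFn ξ (1 / 2)) *
      ∫ y in (0:ℝ)..1, (1 - y ^ 2) ^ (ξ - 1) * ((f (x + y * c * t) + f (x - y * c * t)) / 2)) :
    ∀ x t, 0 < t →
      deriv (deriv (fun s => u x s)) t + (2 * ξ / t) * deriv (fun s => u x s) t
        = c ^ 2 * deriv (deriv (fun y => u y t)) x :=
  stmt_6_general ξ c hξ f hf u hu
end

section
/- Let ν∈(0,1/3)∖{1/4} and set C₁ = (1/2)·(Γ(1-3ν)/Γ(1-4ν))·(Γ(1-2ν)/Γ(1-ν)) and C₂ = (1/4)·(Γ(1-3ν)/Γ(1-4ν)). Then u(x,t) = C₁ t^{-ν} - C₂ x² t^{-3ν} satisfies the nonlinear time-fractional equation t^{-2ν}·∂^ν u/∂t^ν + t^{-ν}·∂²u/∂x² + (∂u/∂x)² = 0 for all x∈ℝ and t>0. -/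
/-!
On powers of `t`, the Riemann–Liouville derivative of order `ν ∈ (0, 1)` acts by
`t ^ β ↦ Γ(β + 1) / Γ(β + 1 - ν) * t ^ (β - ν)`: the fractional integral of order `1 - ν` of
`s ^ β` is a Beta integral, a constant multiple of `t ^ (β + 1 - ν)`, and differentiating it
costs one step of the recurrence `Γ(x + 1) = x Γ(x)`. Substituting `u`, every term of the equation
becomes a multiple of `t ^ (-4ν)` or of `x² t ^ (-6ν)`, and `C₁`, `C₂` are chosen so that both
coefficients vanish.
-/

open MeasureTheory Real Set

/-- The Riemann–Liouville fractional derivative of order `ν > 0`. -/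
noncomputable def RLderiv (ν : ℝ) (f : ℝ → ℝ) (t : ℝ) : ℝ :=
  iteratedDeriv ⌈ν⌉₊
    (fun τ => (1 / Real.Gamma ((⌈ν⌉₊ : ℝ) - ν)) *
      ∫ s in (0:ℝ)..τ, (τ - s) ^ ((⌈ν⌉₊ : ℝ) - ν - 1) * f s) t

theorem Real.inv_Gamma_eq_self_mul_inv_Gamma_add_one (s : ℝ) :
    (Gamma s)⁻¹ = s * (Gamma (s + 1))⁻¹ := by
  rcases ne_or_eq s 0 with hs | rfl
  · rw [Gamma_add_one hs, mul_inv, mul_inv_cancel_left₀ hs]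
  · rw [zero_add, Gamma_zero, inv_zero, zero_mul]

section BetaIntegral

variable {a b τ : ℝ}

theorem intervalIntegrable_rpow_mul_sub_rpow_half (ha : 0 < a) (hτ : 0 < τ) :
    IntervalIntegrable (fun x => x ^ (a - 1) * (τ - x) ^ (b - 1)) volume 0 (τ / 2) := by
  refine (intervalIntegral.intervalIntegrable_rpow' (by linarith)).mul_continuousOn ?_
  refine (continuousOn_const.sub continuousOn_id).rpow_const fun x hx => Or.inl ?_
  rw [uIcc_of_le (by positivity)] at hx
  exact (sub_pos.2 (hx.2.trans_lt (half_lt_self hτ))).ne'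

theorem intervalIntegrable_rpow_mul_sub_rpow (ha : 0 < a) (hb : 0 < b) (hτ : 0 < τ) :
    IntervalIntegrable (fun x => x ^ (a - 1) * (τ - x) ^ (b - 1)) volume 0 τ := by
  refine (intervalIntegrable_rpow_mul_sub_rpow_half ha hτ).trans ?_
  have h := (intervalIntegrable_rpow_mul_sub_rpow_half (b := a) hb hτ).comp_sub_left τ
  simp only [sub_sub_cancel, sub_zero, sub_half] at h
  simpa only [mul_comm] using h.symm

theorem integral_rpow_mul_sub_rpow (ha : 0 < a) (hb : 0 < b) (hτ : 0 < τ) :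
    ∫ x in (0:ℝ)..τ, x ^ (a - 1) * (τ - x) ^ (b - 1)
      = Gamma a * Gamma b / Gamma (a + b) * τ ^ (a + b - 1) := by
  have hcast : ((∫ x in (0:ℝ)..τ, x ^ (a - 1) * (τ - x) ^ (b - 1) : ℝ) : ℂ)
      = ∫ x in (0:ℝ)..τ, (x : ℂ) ^ ((a : ℂ) - 1) * ((τ : ℂ) - x) ^ ((b : ℂ) - 1) := by
    rw [← intervalIntegral.integral_ofReal]
    refine intervalIntegral.integral_congr fun x hx => ?_
    rw [uIcc_of_le hτ.le] at hx
    push_cast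
    rw [Complex.ofReal_cpow hx.1, ← Complex.ofReal_sub,
      Complex.ofReal_cpow (sub_nonneg.2 hx.2)]
    push_cast
    ring
  rw [← Complex.ofReal_inj, hcast, Complex.betaIntegral_scaled _ _ hτ,
    Complex.betaIntegral_eq_Gamma_mul_div _ _ (by simpa using ha) (by simpa using hb)]
  push_cast
  rw [Complex.ofReal_cpow hτ.le, ← Complex.ofReal_add, Complex.Gamma_ofReal, Complex.Gamma_ofReal,
    Complex.Gamma_ofReal]
  push_cast
  ring

end BetaIntegral

noncomputable def fracIntegral (α : ℝ) (f : ℝ → ℝ) (τ : ℝ) : ℝ :=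
  1 / Gamma α * ∫ s in (0:ℝ)..τ, (τ - s) ^ (α - 1) * f s

section FractionalIntegral

variable {α β ν τ t : ℝ}

theorem RLderiv_eq_deriv_fracIntegral (hν : ν ∈ Ioc 0 1) (f : ℝ → ℝ) (t : ℝ) :
    RLderiv ν f t = deriv (fracIntegral (1 - ν) f) t := by
  have hceil : ⌈ν⌉₊ = 1 := Nat.ceil_eq_iff one_ne_zero |>.2 (by simpa using hν)
  rw [RLderiv, hceil, iteratedDeriv_one, Nat.cast_one]
  rfl

theorem fracIntegral_const_mul (c : ℝ) (f : ℝ → ℝ) (τ : ℝ) :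
    fracIntegral α (fun s => c * f s) τ = c * fracIntegral α f τ := by
  simp only [fracIntegral, mul_left_comm _ c, intervalIntegral.integral_const_mul]

theorem fracIntegral_sub {f g : ℝ → ℝ}
    (hf : IntervalIntegrable (fun s => (τ - s) ^ (α - 1) * f s) volume 0 τ)
    (hg : IntervalIntegrable (fun s => (τ - s) ^ (α - 1) * g s) volume 0 τ) :
    fracIntegral α (fun s => f s - g s) τ = fracIntegral α f τ - fracIntegral α g τ := by
  simp only [fracIntegral, mul_sub, intervalIntegral.integral_sub hf hg]

theorem intervalIntegrable_sub_rpow_mul_rpow (hα : 0 < α) (hβ : -1 < β) (hτ : 0 < τ) :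
    IntervalIntegrable (fun s => (τ - s) ^ (α - 1) * s ^ β) volume 0 τ := by
  have h := intervalIntegrable_rpow_mul_sub_rpow (a := β + 1) (by linarith) hα hτ
  simpa only [add_sub_cancel_right, mul_comm] using h

theorem fracIntegral_rpow (hα : 0 < α) (hβ : -1 < β) (hτ : 0 < τ) :
    fracIntegral α (fun s => s ^ β) τ = Gamma (β + 1) / Gamma (β + 1 + α) * τ ^ (β + α) := by
  have h := integral_rpow_mul_sub_rpow (a := β + 1) (by linarith) hα hτ
  simp only [add_sub_cancel_right, mul_comm (_ ^ β)] at h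
  rw [fracIntegral, h, show β + 1 + α - 1 = β + α by ring]
  field_simp [(Gamma_pos_of_pos hα).ne']

-- Since `Γ 0 = 0` in Mathlib, this also covers `β + 1 = ν`, where the derivative vanishes.
theorem hasDerivAt_fracIntegral_one_sub_rpow (hν : ν < 1) (hβ : -1 < β) (ht : 0 < t) :
    HasDerivAt (fracIntegral (1 - ν) (fun s => s ^ β))
      (Gamma (β + 1) / Gamma (β + 1 - ν) * t ^ (β - ν)) t := by
  have hpow := (hasDerivAt_rpow_const (p := β + (1 - ν)) (Or.inl ht.ne')).const_mul
    (Gamma (β + 1) / Gamma (β + 1 + (1 - ν)))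
  refine (hpow.congr_of_eventuallyEq ?_).congr_deriv ?_
  · filter_upwards [Ioi_mem_nhds ht] with τ hτ using fracIntegral_rpow (by linarith) hβ hτ
  · rw [show β + 1 + (1 - ν) = β + 1 - ν + 1 by ring, show β + (1 - ν) - 1 = β - ν by ring,
      div_eq_mul_inv _ (Gamma (β + 1 - ν)), inv_Gamma_eq_self_mul_inv_Gamma_add_one]
    ring

theorem RLderiv_const_mul_rpow_sub_const_mul_rpow (hν : ν ∈ Ioo 0 1) {γ : ℝ} (hβ : -1 < β)
    (hγ : -1 < γ) (a b : ℝ) (ht : 0 < t) :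
    RLderiv ν (fun s => a * s ^ β - b * s ^ γ) t
      = a * (Gamma (β + 1) / Gamma (β + 1 - ν) * t ^ (β - ν))
        - b * (Gamma (γ + 1) / Gamma (γ + 1 - ν) * t ^ (γ - ν)) := by
  rw [RLderiv_eq_deriv_fracIntegral (Ioo_subset_Ioc_self hν)]
  refine HasDerivAt.deriv <| (((hasDerivAt_fracIntegral_one_sub_rpow hν.2 hβ ht).const_mul a).sub
    ((hasDerivAt_fracIntegral_one_sub_rpow hν.2 hγ ht).const_mul b)).congr_of_eventuallyEq ?_
  filter_upwards [Ioi_mem_nhds ht] with τ hτ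
  have hα : 0 < 1 - ν := by linarith [hν.2]
  have hint {δ : ℝ} (hδ : -1 < δ) (c : ℝ) :
      IntervalIntegrable (fun s => (τ - s) ^ (1 - ν - 1) * (c * s ^ δ)) volume 0 τ := by
    simpa only [mul_left_comm] using (intervalIntegrable_sub_rpow_mul_rpow hα hδ hτ).const_mul c
  rw [fracIntegral_sub (hint hβ a) (hint hγ b), fracIntegral_const_mul, fracIntegral_const_mul]
  rfl

end FractionalIntegral

theorem stmt_8_general (ν C₁ C₂ : ℝ) (hν : ν ∈ Set.Ioo (0:ℝ) (1/3))
    (hC₁ : C₁ = (1/2) * (Real.Gamma (1 - 3*ν) / Real.Gamma (1 - 4*ν)) *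
      (Real.Gamma (1 - 2*ν) / Real.Gamma (1 - ν)))
    (hC₂ : C₂ = (1/4) * (Real.Gamma (1 - 3*ν) / Real.Gamma (1 - 4*ν)))
    (u : ℝ → ℝ → ℝ)
    (hu : ∀ x t, u x t = C₁ * t ^ (-ν) - C₂ * x ^ 2 * t ^ (-(3*ν))) :
    ∀ x t, 0 < t →
      t ^ (-(2*ν)) * RLderiv ν (fun s => u x s) t
        + t ^ (-ν) * deriv (deriv (fun y => u y t)) x
        + (deriv (fun y => u y t) x) ^ 2 = 0 := by
  obtain ⟨hν0, hν3⟩ := hν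
  intro x t ht
  have hRL : RLderiv ν (fun s => u x s) t
      = C₁ * (Gamma (1 - ν) / Gamma (1 - 2 * ν) * t ^ (-(2 * ν)))
        - C₂ * x ^ 2 * (Gamma (1 - 3 * ν) / Gamma (1 - 4 * ν) * t ^ (-(4 * ν))) := by
    simp only [hu]
    convert RLderiv_const_mul_rpow_sub_const_mul_rpow (β := -ν) (γ := -(3 * ν)) ⟨hν0, by linarith⟩
      (by linarith) (by linarith) C₁ (C₂ * x ^ 2) ht using 5 <;> ring_nf
  have hD1 : deriv (fun y => u y t) = fun y => -(2 * C₂ * t ^ (-(3 * ν))) * y := by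
    funext y
    simp only [hu]
    rw [((((hasDerivAt_pow 2 y).const_mul C₂).mul_const _).const_sub _).deriv]
    ring
  have hD2 : deriv (deriv (fun y => u y t)) x = -(2 * C₂ * t ^ (-(3 * ν))) := by
    simp [hD1]
  have hpow (k : ℕ) : t ^ (-(k * ν)) = (t ^ (-ν)) ^ k := by
    rw [← rpow_mul_natCast ht.le]
    ring_nf
  have h2 := hpow 2
  have h3 := hpow 3
  have h4 := hpow 4
  push_cast at h2 h3 h4
  have hΓ1 : Gamma (1 - ν) ≠ 0 := (Gamma_pos_of_pos (by linarith)).ne'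
  have hΓ2 : Gamma (1 - 2 * ν) ≠ 0 := (Gamma_pos_of_pos (by linarith)).ne'
  rw [hRL, hD2, hD1, h2, h3, h4, hC₁, hC₂]
  generalize Gamma (1 - 3 * ν) / Gamma (1 - 4 * ν) = g
  generalize Gamma (1 - ν) = a at hΓ1 ⊢
  generalize Gamma (1 - 2 * ν) = b at hΓ2 ⊢
  field_simp
  ring

theorem stmt_8 (ν C₁ C₂ : ℝ) (hν : ν ∈ Set.Ioo (0:ℝ) (1/3)) (hν4 : ν ≠ 1/4)
    (hC₁ : C₁ = (1/2) * (Real.Gamma (1 - 3*ν) / Real.Gamma (1 - 4*ν)) *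
      (Real.Gamma (1 - 2*ν) / Real.Gamma (1 - ν)))
    (hC₂ : C₂ = (1/4) * (Real.Gamma (1 - 3*ν) / Real.Gamma (1 - 4*ν)))
    (u : ℝ → ℝ → ℝ)
    (hu : ∀ x t, u x t = C₁ * t ^ (-ν) - C₂ * x ^ 2 * t ^ (-(3*ν))) :
    ∀ x t, 0 < t →
      t ^ (-(2*ν)) * RLderiv ν (fun s => u x s) t
        + t ^ (-ν) * deriv (deriv (fun y => u y t)) x
        + (deriv (fun y => u y t) x) ^ 2 = 0 :=
  stmt_8_general ν C₁ C₂ hν hC₁ hC₂ u hu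
end
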